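/- Combining the two spectral sequences of the double complex: if the Felder cohomology H_F (computed on the full complex, i.e., the d-cohomology when d is the Felder operator) is concentrated at Felder degree 0, and also when roles are interchanged the Felder complex exists only at degrees 0 and ε ∈ {+1, −1}, then the relative BRST cohomology of the irreducible module satisfies H_rel^n(H_F^0) ≅ H_F^0(H_rel^n) ⊕ H_F^ε(H_rel^{n−ε}). -/

import Mathlib

/-!
The Felder complex has only the columns `0` and `ε`, and its rows are exact away from `0`. Hence
`H_F^0` is the kernel (`ε = 1`) or the cokernel (`ε = -1`) of the column map `Q_F`, which is then
degreewise surjective (resp. injective), and `H_F^0` sits in a short exact sequence of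
`Q̂`-complexes with the two columns. Over a field the long exact cohomology sequence splits:
`H^n(H_F^0)` is the direct sum of the kernel and the cokernel of the maps that `Q_F` induces on
`H_rel`, and these are `H_F^0(H_rel^n)` and `H_F^ε(H_rel^{n-ε})`.
-/

open CategoryTheory CategoryTheory.Limits

universe u v

lemma ModuleCat.nonempty_iso_cokernel_biprod_kernel {k : Type u} [DivisionRing k]
    {W₁ W₂ W₃ W₄ W₅ : ModuleCat.{v} k} {f : W₁ ⟶ W₂} {g : W₂ ⟶ W₃} {h : W₃ ⟶ W₄} {l : W₄ ⟶ W₅}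
    {w₁ : f ≫ g = 0} {w₂ : g ≫ h = 0} {w₃ : h ≫ l = 0}
    (e₁ : (ShortComplex.mk f g w₁).Exact) (e₂ : (ShortComplex.mk g h w₂).Exact)
    (e₃ : (ShortComplex.mk h l w₃).Exact) :
    Nonempty (W₃ ≅ cokernel f ⊞ kernel l) := by
  rw [ShortComplex.moduleCat_exact_iff_range_eq_ker] at e₁ e₂ e₃
  -- `W₃ = ker h ⊕ V` with `ker h = im g ≅ coker f` and `V ≅ im h = ker l`.
  obtain ⟨V, hV⟩ := Submodule.exists_isCompl (LinearMap.ker h.hom)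
  let kerH : (W₂ ⧸ LinearMap.range f.hom) ≃ₗ[k] LinearMap.ker h.hom :=
    (Submodule.quotEquivOfEq _ _ e₁).trans
      ((LinearMap.quotKerEquivRange g.hom).trans (LinearEquiv.ofEq _ _ e₂))
  let complH : V ≃ₗ[k] LinearMap.ker l.hom :=
    ((Submodule.quotientEquivOfIsCompl _ V hV).symm.trans
      (LinearMap.quotKerEquivRange h.hom)).trans (LinearEquiv.ofEq _ _ e₃)
  exact ⟨((Submodule.prodEquivOfIsCompl _ V hV).symm.trans
      (kerH.symm.prodCongr complH)).toModuleIso ≪≫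
    ((ModuleCat.cokernelIsoRangeQuotient f).toLinearEquiv.prodCongr
      (ModuleCat.kernelIsoKer l).toLinearEquiv).toModuleIso.symm ≪≫
    (ModuleCat.biprodIsoProd _ _).symm⟩

namespace CategoryTheory.ShortComplex.ShortExact

variable {k : Type u} {ι : Type*} [DivisionRing k] {c : ComplexShape ι}
  {S : ShortComplex (HomologicalComplex (ModuleCat.{v} k) c)}

lemma nonempty_homology₁_iso (hS : S.ShortExact) {i j : ι} (hij : c.Rel i j) :
    Nonempty (S.X₁.homology j ≅ cokernel (HomologicalComplex.homologyMap S.g i) ⊞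
      kernel (HomologicalComplex.homologyMap S.g j)) :=
  ModuleCat.nonempty_iso_cokernel_biprod_kernel (hS.homology_exact₃ i j hij)
    (hS.homology_exact₁ i j hij) (hS.homology_exact₂ j)

lemma nonempty_homology₃_iso (hS : S.ShortExact) {i j : ι} (hij : c.Rel i j) :
    Nonempty (S.X₃.homology i ≅ cokernel (HomologicalComplex.homologyMap S.f i) ⊞
      kernel (HomologicalComplex.homologyMap S.f j)) :=
  ModuleCat.nonempty_iso_cokernel_biprod_kernel (hS.homology_exact₂ i)
    (hS.homology_exact₃ i j hij) (hS.homology_exact₁ i j hij)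

end CategoryTheory.ShortComplex.ShortExact

namespace HomologicalComplex

variable {C ι : Type*} [Category C] [Abelian C] {c : ComplexShape ι}
  (K : HomologicalComplex C c) {i j k : ι}

noncomputable def homologyIsoKernel (hij : c.Rel i j) (hjk : c.Rel j k)
    (hi : IsZero (K.X i)) :
    K.homology j ≅ kernel (K.d j k) :=
  (K.isoHomologyπ i j (c.prev_eq' hij) (hi.eq_zero_of_src _)).symm ≪≫
    IsLimit.conePointUniqueUpToIso (K.cyclesIsKernel j k (c.next_eq' hjk)) (limit.isLimit _)

noncomputable def homologyIsoCokernel (hij : c.Rel i j) (hjk : c.Rel j k)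
    (hk : IsZero (K.X k)) :
    K.homology j ≅ cokernel (K.d i j) :=
  K.isoHomologyι j k (c.next_eq' hjk) (hk.eq_zero_of_tgt _) ≪≫
    IsColimit.coconePointUniqueUpToIso (K.opcyclesIsCokernel i j (c.prev_eq' hij))
      (colimit.isColimit _)

lemma epi_d_of_isZero_homology (hij : c.Rel i j) (hjk : c.Rel j k) (hk : IsZero (K.X k))
    (hj : IsZero (K.homology j)) : Epi (K.d i j) :=
  Preadditive.epi_of_isZero_cokernel _ (hj.of_iso (K.homologyIsoCokernel hij hjk hk).symm)

lemma mono_d_of_isZero_homology (hij : c.Rel i j) (hjk : c.Rel j k) (hi : IsZero (K.X i))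
    (hj : IsZero (K.homology j)) : Mono (K.d j k) :=
  Preadditive.mono_of_isZero_kernel _ (hj.of_iso (K.homologyIsoKernel hij hjk hi).symm)

lemma shortExact_iCycles_d (hij : c.Rel i j) (hjk : c.Rel j k) (hk : IsZero (K.X k))
    (hj : IsZero (K.homology j)) :
    (ShortComplex.mk (K.iCycles i) (K.d i j) (K.iCycles_d i j)).ShortExact where
  exact := ShortComplex.exact_of_f_is_kernel _ (K.cyclesIsKernel i j (c.next_eq' hij))
  epi_g := K.epi_d_of_isZero_homology hij hjk hk hj

lemma shortExact_d_pOpcycles (hij : c.Rel i j) (hjk : c.Rel j k) (hi : IsZero (K.X i))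
    (hj : IsZero (K.homology j)) :
    (ShortComplex.mk (K.d j k) (K.pOpcycles k) (K.d_pOpcycles j k)).ShortExact where
  exact := ShortComplex.exact_of_g_is_cokernel _ (K.opcyclesIsCokernel j k (c.prev_eq' hjk))
  mono_f := K.mono_d_of_isZero_homology hij hjk hi hj

end HomologicalComplex

namespace HomologicalComplex₂

open HomologicalComplex

variable {C ι₁ ι₂ : Type*} [Category C] [Abelian C] {c₁ : ComplexShape ι₁} {c₂ : ComplexShape ι₂}
  (K : HomologicalComplex₂ C c₁ c₂) {h i j l : ι₁}

noncomputable abbrev horizontalHomology (i : ι₁) : HomologicalComplex C c₂ :=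
  ((homologyFunctor C c₁ i).mapHomologicalComplex c₂).obj K.flip

noncomputable abbrev verticalHomology (n : ι₂) : HomologicalComplex C c₁ :=
  ((homologyFunctor C c₂ n).mapHomologicalComplex c₁).obj K

lemma isZero_flip_X_X {p : ι₁} (hp : IsZero (K.X p)) (q : ι₂) : IsZero ((K.flip.X q).X p) :=
  (eval C c₂ q).map_isZero hp

lemma exists_shortExact_horizontalHomology_d (hhi : c₁.Rel h i) (hij : c₁.Rel i j)
    (hjl : c₁.Rel j l) (hh : IsZero (K.X h)) (hl : IsZero (K.X l))
    (hrows : ∀ q, IsZero ((K.flip.X q).homology j)) :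
    ∃ (f : K.horizontalHomology i ⟶ K.X i) (w : f ≫ K.d i j = 0),
      (ShortComplex.mk f _ w).ShortExact := by
  let e (q : ι₂) := (K.flip.X q).isoHomologyπ h i (c₁.prev_eq' hhi)
    ((K.isZero_flip_X_X hh q).eq_zero_of_src _)
  let f : K.horizontalHomology i ⟶ K.X i :=
    { f := fun q => (e q).inv ≫ (K.flip.X q).iCycles i
      comm' := fun q q' _ => by
        change ((e q).inv ≫ (K.flip.X q).iCycles i) ≫ (K.flip.d q q').f i =
          homologyMap (K.flip.d q q') i ≫ (e q').inv ≫ (K.flip.X q').iCycles i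
        rw [← cancel_epi (e q).hom, Category.assoc, Iso.hom_inv_id_assoc]
        simp [e] }
  have w : f ≫ K.d i j = 0 := by
    ext q : 1
    change ((e q).inv ≫ (K.flip.X q).iCycles i) ≫ (K.flip.X q).d i j = 0
    rw [Category.assoc, iCycles_d, comp_zero]
  refine ⟨f, w, (shortExact_iff_degreewise_shortExact _).2 fun q => ?_⟩
  refine ShortComplex.shortExact_of_iso ?_
    ((K.flip.X q).shortExact_iCycles_d hij hjl (K.isZero_flip_X_X hl q) (hrows q))
  refine ShortComplex.isoMk (e q) (Iso.refl _) (Iso.refl _) ?_ ?_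
  · exact (Iso.hom_inv_id_assoc _ _).trans (Category.comp_id _).symm
  · exact (Category.id_comp _).trans (Category.comp_id _).symm

lemma exists_shortExact_d_horizontalHomology (hhi : c₁.Rel h i) (hij : c₁.Rel i j)
    (hjl : c₁.Rel j l) (hh : IsZero (K.X h)) (hl : IsZero (K.X l))
    (hrows : ∀ q, IsZero ((K.flip.X q).homology i)) :
    ∃ (g : K.X j ⟶ K.horizontalHomology j) (w : K.d i j ≫ g = 0),
      (ShortComplex.mk _ g w).ShortExact := by
  let e (q : ι₂) := (K.flip.X q).isoHomologyι j l (c₁.next_eq' hjl)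
    ((K.isZero_flip_X_X hl q).eq_zero_of_tgt _)
  let g : K.X j ⟶ K.horizontalHomology j :=
    { f := fun q => (K.flip.X q).pOpcycles j ≫ (e q).inv
      comm' := fun q q' _ => by
        change ((K.flip.X q).pOpcycles j ≫ (e q).inv) ≫ homologyMap (K.flip.d q q') j =
          (K.flip.d q q').f j ≫ (K.flip.X q').pOpcycles j ≫ (e q').inv
        rw [← cancel_mono (e q').hom]
        simp only [Category.assoc, Iso.inv_hom_id, Category.comp_id]
        simp [e] }
  have w : K.d i j ≫ g = 0 := by
    ext q : 1
    change (K.flip.X q).d i j ≫ (K.flip.X q).pOpcycles j ≫ (e q).inv = 0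
    rw [d_pOpcycles_assoc, zero_comp]
  refine ⟨g, w, (shortExact_iff_degreewise_shortExact _).2 fun q => ?_⟩
  refine ShortComplex.shortExact_of_iso ?_
    ((K.flip.X q).shortExact_d_pOpcycles hhi hij (K.isZero_flip_X_X hh q) (hrows q))
  refine ShortComplex.isoMk (Iso.refl _) (Iso.refl _) (e q).symm ?_ ?_
  · exact (Category.id_comp _).trans (Category.comp_id _).symm
  · exact Category.id_comp _

section ModuleCat

variable {k : Type u} {ι₁ ι₂ : Type*} [DivisionRing k] {c₁ : ComplexShape ι₁}
  {c₂ : ComplexShape ι₂} (K : HomologicalComplex₂ (ModuleCat.{v} k) c₁ c₂)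
  {h i j l : ι₁} {m n : ι₂}

lemma nonempty_homology_horizontalHomology_iso_left (hhi : c₁.Rel h i) (hij : c₁.Rel i j)
    (hjl : c₁.Rel j l) (hh : IsZero (K.X h)) (hl : IsZero (K.X l))
    (hrows : ∀ q, IsZero ((K.flip.X q).homology j)) (hmn : c₂.Rel m n) :
    Nonempty ((K.horizontalHomology i).homology n ≅
      (K.verticalHomology n).homology i ⊞ (K.verticalHomology m).homology j) := by
  obtain ⟨_, _, hS⟩ := K.exists_shortExact_horizontalHomology_d hhi hij hjl hh hl hrows
  obtain ⟨e⟩ := hS.nonempty_homology₁_iso hmn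
  exact ⟨e ≪≫ biprod.braiding _ _ ≪≫ biprod.mapIso
    ((K.verticalHomology n).homologyIsoKernel hhi hij ((homologyFunctor _ _ n).map_isZero hh)).symm
    ((K.verticalHomology m).homologyIsoCokernel hij hjl
      ((homologyFunctor _ _ m).map_isZero hl)).symm⟩

lemma nonempty_homology_horizontalHomology_iso_right (hhi : c₁.Rel h i) (hij : c₁.Rel i j)
    (hjl : c₁.Rel j l) (hh : IsZero (K.X h)) (hl : IsZero (K.X l))
    (hrows : ∀ q, IsZero ((K.flip.X q).homology i)) (hmn : c₂.Rel m n) :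
    Nonempty ((K.horizontalHomology j).homology m ≅
      (K.verticalHomology m).homology j ⊞ (K.verticalHomology n).homology i) := by
  obtain ⟨_, _, hS⟩ := K.exists_shortExact_d_horizontalHomology hhi hij hjl hh hl hrows
  obtain ⟨e⟩ := hS.nonempty_homology₃_iso hmn
  exact ⟨e ≪≫ biprod.mapIso
    ((K.verticalHomology m).homologyIsoCokernel hij hjl
      ((homologyFunctor _ _ m).map_isZero hl)).symm
    ((K.verticalHomology n).homologyIsoKernel hhi hij ((homologyFunctor _ _ n).map_isZero hh)).symm⟩

end ModuleCat

end HomologicalComplex₂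

theorem felder_resolution_relative_cohomology_general
    (K : HomologicalComplex₂ (ModuleCat ℂ) (ComplexShape.up ℤ) (ComplexShape.up ℤ))
    (ε : ℤ) (hε : ε = 1 ∨ ε = -1)
    (hsupp : ∀ p : ℤ, p ≠ 0 → p ≠ ε → IsZero (K.X p))
    (hfelder : ∀ q p : ℤ, p ≠ 0 → IsZero ((K.flip.X q).homology p))
    (n : ℤ) :
    Nonempty (
      ((((HomologicalComplex.homologyFunctor (ModuleCat ℂ) (ComplexShape.up ℤ)
          0).mapHomologicalComplex (ComplexShape.up ℤ)).obj K.flip).homology n) ≅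
      ((((HomologicalComplex.homologyFunctor (ModuleCat ℂ) (ComplexShape.up ℤ)
          n).mapHomologicalComplex (ComplexShape.up ℤ)).obj K).homology 0) ⊞
      ((((HomologicalComplex.homologyFunctor (ModuleCat ℂ) (ComplexShape.up ℤ)
          (n - ε)).mapHomologicalComplex (ComplexShape.up ℤ)).obj K).homology ε)) := by
  rcases hε with rfl | rfl
  · exact K.nonempty_homology_horizontalHomology_iso_left (h := -1) (l := 2) (by simp) (by simp)
      (by simp) (hsupp _ (by norm_num) (by norm_num)) (hsupp _ (by norm_num) (by norm_num))
      (fun q => hfelder q 1 one_ne_zero) (by simp)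
  · rw [sub_neg_eq_add]
    exact K.nonempty_homology_horizontalHomology_iso_right (h := -2) (l := 1) (by simp) (by simp)
      (by simp) (hsupp _ (by norm_num) (by norm_num)) (hsupp _ (by norm_num) (by norm_num))
      (fun q => hfelder q (-1) (by norm_num)) (by simp)

/-- Felder resolution: for a double complex `K` whose outer index `p` is the
Felder degree (horizontal differential `Q_F`) and whose columns `K.X p` carry the
relative BRST differential `Q̂`, suppose (a) the Felder complex exists only at
degrees `0` and `ε` (`ε = ±1`), i.e. `K.X p = 0` otherwise, and (b) the Felder
cohomology of every row is concentrated at Felder index `0`. Then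
`H_rel^n(H_F^0) ≅ H_F^0(H_rel^n) ⊕ H_F^ε(H_rel^{n−ε})`. -/
theorem felder_resolution_relative_cohomology
    (K : HomologicalComplex₂ (ModuleCat ℂ) (ComplexShape.up ℤ) (ComplexShape.up ℤ))
    [K.HasTotal (ComplexShape.up ℤ)]
    (ε : ℤ) (hε : ε = 1 ∨ ε = -1)
    (hsupp : ∀ p : ℤ, p ≠ 0 → p ≠ ε → IsZero (K.X p))
    (hfelder : ∀ q p : ℤ, p ≠ 0 → IsZero ((K.flip.X q).homology p))
    (n : ℤ) :
    Nonempty (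
      ((((HomologicalComplex.homologyFunctor (ModuleCat ℂ) (ComplexShape.up ℤ)
          0).mapHomologicalComplex (ComplexShape.up ℤ)).obj K.flip).homology n) ≅
      ((((HomologicalComplex.homologyFunctor (ModuleCat ℂ) (ComplexShape.up ℤ)
          n).mapHomologicalComplex (ComplexShape.up ℤ)).obj K).homology 0) ⊞
      ((((HomologicalComplex.homologyFunctor (ModuleCat ℂ) (ComplexShape.up ℤ)
          (n - ε)).mapHomologicalComplex (ComplexShape.up ℤ)).obj K).homology ε)) :=
  felder_resolution_relative_cohomology_general K ε hε hsupp hfelder n
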